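/- arXiv:2010.10130 — 2 statements merged into one kernel-verified Lean document; each statement's English description precedes it below -/
import Mathlib

section
/- The map x ↦ Δ(x) is norm-continuous on the set of nonzero positive bounded operators: if x_n are positive, x is positive and nonzero, and ‖x_n − x‖ → 0, then Δ(x_n) → Δ(x). -/
variable {H : Type*} [NormedAddCommGroup H] [InnerProductSpace ℂ H] [CompleteSpace H]

/-- Michelson contrast / centrality measure for operators. -/
noncomputable def Delta (x : H →L[ℂ] H) : ℝ :=
  ⨅ A : {A : ℝ // 0 < A}, ‖(1 : H →L[ℂ] H) - (A.1)⁻¹ • x‖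

/-!
`Δ` is locally Lipschitz away from `0`. Since `Δ ≤ 1`, only the scales `A ≥ ‖v‖ / 2` matter in the
infimum defining `Δ v`: for smaller `A` one has `‖1 - A⁻¹ v‖ ≥ A⁻¹ ‖v‖ - 1 ≥ 1`. On the remaining
scales, `A ↦ ‖1 - A⁻¹ v‖` moves by at most `A⁻¹ ‖u - v‖ ≤ 2 ‖u - v‖ / ‖v‖` when `v` is replaced
by `u`, so `Δ u ≤ Δ v + 2 ‖u - v‖ / ‖v‖`.
-/

open Filter Topology

section
variable {E : Type*} [NormedAddCommGroup E] [InnerProductSpace ℂ E]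

theorem bddBelow_range_norm_one_sub_smul (x : E →L[ℂ] E) :
    BddBelow (Set.range fun A : {A : ℝ // 0 < A} => ‖(1 : E →L[ℂ] E) - A.1⁻¹ • x‖) :=
  ⟨0, by rintro r ⟨A, rfl⟩; positivity⟩

theorem Delta_le {A : ℝ} (hA : 0 < A) (x : E →L[ℂ] E) : Delta x ≤ ‖(1 : E →L[ℂ] E) - A⁻¹ • x‖ :=
  ciInf_le (bddBelow_range_norm_one_sub_smul x) ⟨A, hA⟩

theorem norm_one_le : ‖(1 : E →L[ℂ] E)‖ ≤ 1 :=
  ContinuousLinearMap.norm_id_le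

theorem Delta_le_one (x : E →L[ℂ] E) : Delta x ≤ 1 := by
  have hbound : ∀ A > 0, Delta x ≤ 1 + A⁻¹ * ‖x‖ := fun A hA =>
    calc Delta x ≤ ‖(1 : E →L[ℂ] E) - A⁻¹ • x‖ := Delta_le hA x
      _ ≤ ‖(1 : E →L[ℂ] E)‖ + ‖A⁻¹ • x‖ := norm_sub_le _ _
      _ ≤ 1 + A⁻¹ * ‖x‖ := by
        rw [norm_smul, Real.norm_of_nonneg (inv_nonneg.2 hA.le)]
        gcongr
        exact norm_one_le
  have hlim : Tendsto (fun A : ℝ => 1 + A⁻¹ * ‖x‖) atTop (𝓝 1) := by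
    simpa using (tendsto_inv_atTop_zero.mul_const ‖x‖).const_add 1
  exact ge_of_tendsto hlim ((eventually_gt_atTop 0).mono hbound)

theorem one_le_norm_one_sub_smul {A : ℝ} (hA : 0 < A) {v : E →L[ℂ] E} (hv : 2 * A ≤ ‖v‖) :
    1 ≤ ‖(1 : E →L[ℂ] E) - A⁻¹ • v‖ := by
  have hreverse : ‖A⁻¹ • v‖ - ‖(1 : E →L[ℂ] E)‖ ≤ ‖(1 : E →L[ℂ] E) - A⁻¹ • v‖ := by
    rw [norm_sub_rev]; exact norm_sub_norm_le _ _
  rw [norm_smul, Real.norm_of_nonneg (inv_nonneg.2 hA.le)] at hreverse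
  have htwo : 2 ≤ A⁻¹ * ‖v‖ := by rw [inv_mul_eq_div, le_div_iff₀ hA]; linarith
  linarith [norm_one_le (E := E)]

theorem Delta_le_add {v : E →L[ℂ] E} (hv : v ≠ 0) (u : E →L[ℂ] E) :
    Delta u ≤ Delta v + 2 / ‖v‖ * ‖u - v‖ := by
  have hv' : 0 < ‖v‖ := norm_pos_iff.2 hv
  set c := 2 / ‖v‖ * ‖u - v‖
  have hscale : ∀ A : {A : ℝ // 0 < A}, Delta u - c ≤ ‖(1 : E →L[ℂ] E) - A.1⁻¹ • v‖ := by
    rintro ⟨A, hA⟩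
    rw [sub_le_iff_le_add]
    rcases lt_or_ge (2 * A) ‖v‖ with hsmall | hlarge
    · calc Delta u ≤ 1 := Delta_le_one u
        _ ≤ ‖(1 : E →L[ℂ] E) - A⁻¹ • v‖ := one_le_norm_one_sub_smul hA hsmall.le
        _ ≤ _ := le_add_of_nonneg_right (by positivity)
    · have hAinv : A⁻¹ ≤ 2 / ‖v‖ := by
        rw [inv_le_comm₀ hA (by positivity), inv_div]; linarith
      calc Delta u ≤ ‖(1 : E →L[ℂ] E) - A⁻¹ • u‖ := Delta_le hA u
        _ ≤ ‖(1 : E →L[ℂ] E) - A⁻¹ • v‖ + ‖A⁻¹ • v - A⁻¹ • u‖ :=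
          norm_sub_le_norm_sub_add_norm_sub _ _ _
        _ = ‖(1 : E →L[ℂ] E) - A⁻¹ • v‖ + A⁻¹ * ‖u - v‖ := by
          rw [← smul_sub, norm_smul, Real.norm_of_nonneg (inv_nonneg.2 hA.le), norm_sub_rev v u]
        _ ≤ ‖(1 : E →L[ℂ] E) - A⁻¹ • v‖ + c := by
          gcongr; exact mul_le_mul_of_nonneg_right hAinv (norm_nonneg _)
  have hinf : Delta u - c ≤ Delta v := le_ciInf hscale
  linarith

theorem lipschitzOnWith_Delta {r : ℝ} (hr : 0 < r) :
    LipschitzOnWith (2 / r).toNNReal (Delta (H := E)) {v | r ≤ ‖v‖} := by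
  refine LipschitzOnWith.of_le_add_mul _ fun u _ v hv => ?_
  have hv0 : v ≠ 0 := norm_pos_iff.1 (hr.trans_le hv)
  calc Delta u ≤ Delta v + 2 / ‖v‖ * ‖u - v‖ := Delta_le_add hv0 u
    _ ≤ Delta v + (2 / r).toNNReal * dist u v := by
      rw [Real.coe_toNNReal _ (by positivity), dist_eq_norm]
      gcongr
      exact hv

theorem continuousAt_Delta {y : E →L[ℂ] E} (hy : y ≠ 0) : ContinuousAt Delta y := by
  have hy' : 0 < ‖y‖ := norm_pos_iff.2 hy
  refine ((lipschitzOnWith_Delta (half_pos hy')).continuousOn).continuousAt ?_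
  exact continuous_norm.continuousAt.preimage_mem_nhds (Ici_mem_nhds (half_lt_self hy'))

end

theorem delta_continuous_general (x : ℕ → (H →L[ℂ] H)) (y : H →L[ℂ] H)
    (hne : y ≠ 0)
    (hconv : Filter.Tendsto (fun n => ‖x n - y‖) Filter.atTop (nhds 0)) :
    Filter.Tendsto (fun n => Delta (x n)) Filter.atTop (nhds (Delta y)) :=
  (continuousAt_Delta hne).tendsto.comp (tendsto_iff_norm_sub_tendsto_zero.2 hconv)

theorem delta_continuous (x : ℕ → (H →L[ℂ] H)) (y : H →L[ℂ] H)
    (hx : ∀ n, (x n).IsPositive) (hy : y.IsPositive) (hne : y ≠ 0)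
    (hconv : Filter.Tendsto (fun n => ‖x n - y‖) Filter.atTop (nhds 0)) :
    Filter.Tendsto (fun n => Delta (x n)) Filter.atTop (nhds (Delta y)) :=
  delta_continuous_general x y hne hconv
end

section
/- For invertible positive bounded operators x and y with Δ(x) ≤ Δ(y), one has Δ(xy) ≤ Δ(y²); consequently Δ(xy) ≤ max(Δ(x²), Δ(y²)) for all positive x, y. -/
/-!
For positive invertible `a` with `m = min σ(a)` and `M = max σ(a)`, the infimum defining `Δ(a)` is
attained at `A = (m + M)/2`, so `Δ(a) = (M - m)/(M + m)` is an increasing function of `M/m`, and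
`Δ(x) ≤ Δ(y)` means `M_x m_y ≤ M_y m_x`. With `s = √x`, `xy` is isospectral with `s y s`, which is
squeezed between `m_y x ≥ m_x m_y` and `M_y x ≤ M_x M_y`. Hence
`Δ(xy) ≤ (M_x M_y - m_x m_y)/(M_x M_y + m_x m_y) ≤ (M_y² - m_y²)/(M_y² + m_y²) = Δ(y²)`,
the middle step being the inequality between condition numbers. For the second claim, `xy` and
`yx` are isospectral when both are invertible, so `x` and `y` may be swapped; if one of them is not
invertible, `Δ` of its square is `1`, while `σ(xy) ⊆ [0, ∞)` gives `Δ(xy) ≤ 1`.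
-/

variable {H : Type*} [NormedAddCommGroup H] [InnerProductSpace ℂ H] [CompleteSpace H]

/-- Michelson contrast defined via the (real) spectrum, used for products `x*y`
of positive operators, which need not be positive but have spectrum in `[0,∞)`. -/
noncomputable def DeltaS (a : H →L[ℂ] H) : ℝ :=
  (sSup (spectrum ℝ a) - sInf (spectrum ℝ a)) /
    (sSup (spectrum ℝ a) + sInf (spectrum ℝ a))

open Set

noncomputable def contrast (m M : ℝ) : ℝ := (M - m) / (M + m)

lemma contrast_le_contrast_iff {a b c d : ℝ} (ha : 0 < a) (hb : 0 ≤ b) (hc : 0 < c)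
    (hd : 0 ≤ d) :
    contrast a b ≤ contrast c d ↔ b * c ≤ d * a := by
  rw [contrast, contrast, div_le_div_iff₀ (by linarith) (by linarith)]
  constructor <;> intro h <;> linarith

lemma contrast_nonneg {m M : ℝ} (hm : 0 ≤ m) (hmM : m ≤ M) : 0 ≤ contrast m M :=
  div_nonneg (by linarith) (by linarith)

lemma contrast_le_one {m M : ℝ} (hm : 0 ≤ m) (hM : 0 ≤ M) : contrast m M ≤ 1 := by
  rcases (add_nonneg hM hm).eq_or_lt with h | h
  · rw [contrast, ← h, div_zero]
    exact zero_le_one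
  · rw [contrast, div_le_one h]
    linarith

lemma contrast_le_max_abs_one_sub_mul {s t : ℝ} (c : ℝ) (hs : 0 ≤ s) (hst : s ≤ t) :
    contrast s t ≤ max |1 - c * s| |1 - c * t| := by
  rcases (hs.trans hst).eq_or_lt with ht | ht
  · simp [contrast, ← ht, le_antisymm (hst.trans ht.ge) hs]
  have hs' : 1 - c * s ≤ max |1 - c * s| |1 - c * t| := le_max_of_le_left (le_abs_self _)
  have ht' : c * t - 1 ≤ max |1 - c * s| |1 - c * t| :=
    le_max_of_le_right (by linarith [neg_le_abs (1 - c * t)])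
  rw [contrast, div_le_iff₀ (by linarith)]
  rcases le_total 2 (c * (t + s)) with h | h
  · nlinarith [mul_le_mul_of_nonneg_left h ht.le]
  · nlinarith [mul_le_mul_of_nonneg_left h hs]

lemma abs_one_sub_inv_midpoint_mul_le_contrast {m M t : ℝ} (hm : 0 < m) (hmt : m ≤ t)
    (htM : t ≤ M) : |1 - ((m + M) / 2)⁻¹ * t| ≤ contrast m M := by
  have hmM : 0 < M + m := by linarith
  have h : 1 - ((m + M) / 2)⁻¹ * t = (M + m - 2 * t) / (M + m) := by
    rw [add_comm m M]
    field_simp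
  rw [h, abs_div, abs_of_pos hmM, contrast]
  gcongr
  rw [abs_le]
  constructor <;> linarith

lemma abs_one_sub_mul_le_norm_one_sub_smul {A : Type*} [NormedRing A] [NormedAlgebra ℝ A]
    [CompleteSpace A] [NormOneClass A] {a : A} {r t : ℝ} (ht : t ∈ spectrum ℝ a) :
    |1 - r * t| ≤ ‖1 - r • a‖ := by
  have h := spectrum.subset_polynomial_aeval a (1 - Polynomial.C r * Polynomial.X) ⟨t, ht, rfl⟩
  simp only [Polynomial.eval_sub, Polynomial.eval_one, Polynomial.eval_mul, Polynomial.eval_C,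
    Polynomial.eval_X, map_sub, map_one, map_mul, Polynomial.aeval_C, Polynomial.aeval_X,
    ← Algebra.smul_def] at h
  simpa using spectrum.norm_le_norm_of_mem h

lemma spectrum_mul_comm_of_isUnit {R A : Type*} [CommSemiring R] [Ring A] [Algebra R A]
    {a : A} (b : A) (ha : IsUnit a) : spectrum R (a * b) = spectrum R (b * a) := by
  obtain ⟨u, rfl⟩ := ha
  rw [← spectrum.units_conjugate' (u := u), ← mul_assoc, Units.inv_mul, one_mul]

section CStarAlgebra

variable {A : Type*} [CStarAlgebra A] [PartialOrder A] [StarOrderedRing A]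

lemma spectrum_sqrt_mul_mul_sqrt_subset_Icc {x y : A} (hx : 0 ≤ x) (hy : IsSelfAdjoint y)
    {mx Mx my My : ℝ} (hmy : 0 ≤ my) (hMy : 0 ≤ My) (hσx : spectrum ℝ x ⊆ Icc mx Mx)
    (hσy : spectrum ℝ y ⊆ Icc my My) :
    spectrum ℝ (CFC.sqrt x * y * CFC.sqrt x) ⊆ Icc (mx * my) (Mx * My) := by
  set s := CFC.sqrt x
  have hs : 0 ≤ s := CFC.sqrt_nonneg x
  have hconj (r : ℝ) : s * algebraMap ℝ A r * s = r • x := by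
    rw [Algebra.algebraMap_eq_smul_one, mul_smul_comm, smul_mul_assoc, mul_one,
      CFC.sqrt_mul_sqrt_self x hx]
  have hmul (r r' : ℝ) : algebraMap ℝ A (r' * r) = r • algebraMap ℝ A r' := by
    rw [Algebra.smul_def, ← map_mul, mul_comm]
  have hx' : IsSelfAdjoint x := .of_nonneg hx
  have hz : IsSelfAdjoint (s * y * s) := hy.conjugate_self (.of_nonneg hs)
  intro t ht
  constructor
  · refine (algebraMap_le_iff_le_spectrum hz).1 ?_ t ht
    calc algebraMap ℝ A (mx * my) = my • algebraMap ℝ A mx := hmul my mx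
      _ ≤ my • x := smul_le_smul_of_nonneg_left
          ((algebraMap_le_iff_le_spectrum hx').2 fun t ht => (hσx ht).1) hmy
      _ = s * algebraMap ℝ A my * s := (hconj my).symm
      _ ≤ s * y * s := conjugate_le_conjugate_of_nonneg
          ((algebraMap_le_iff_le_spectrum hy).2 fun t ht => (hσy ht).1) hs
  · refine (le_algebraMap_iff_spectrum_le hz).1 ?_ t ht
    calc s * y * s ≤ s * algebraMap ℝ A My * s := conjugate_le_conjugate_of_nonneg
          ((le_algebraMap_iff_spectrum_le hy).2 fun t ht => (hσy ht).2) hs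
      _ = My • x := hconj My
      _ ≤ My • algebraMap ℝ A Mx := smul_le_smul_of_nonneg_left
          ((le_algebraMap_iff_spectrum_le hx').2 fun t ht => (hσx ht).2) hMy
      _ = algebraMap ℝ A (Mx * My) := (hmul My Mx).symm

lemma spectrum_mul_subset_Ici {x y : A} (hx : 0 ≤ x) (hy : 0 ≤ y) :
    spectrum ℝ (x * y) ⊆ Ici 0 := by
  intro t ht
  rcases eq_or_ne t 0 with rfl | ht0
  · exact self_mem_Ici
  have h := spectrum.nonzero_mul_comm (𝕜 := ℝ) (CFC.sqrt x) (CFC.sqrt x * y)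
  rw [← mul_assoc, CFC.sqrt_mul_sqrt_self x hx] at h
  have hmem : t ∈ spectrum ℝ (CFC.sqrt x * y * CFC.sqrt x) \ {0} := h ▸ ⟨ht, ht0⟩
  exact spectrum_nonneg_of_nonneg (conjugate_nonneg_of_nonneg hy (CFC.sqrt_nonneg x)) hmem.1

lemma spectrum_mul_eq_spectrum_sqrt_mul_mul_sqrt {x : A} (hx : 0 ≤ x) (hux : IsUnit x)
    (y : A) :
    spectrum ℝ (x * y) = spectrum ℝ (CFC.sqrt x * y * CFC.sqrt x) := by
  rw [← spectrum_mul_comm_of_isUnit _ ((CFC.isUnit_sqrt_iff x hx).2 hux), ← mul_assoc,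
    CFC.sqrt_mul_sqrt_self x hx]

lemma sInf_spectrum_pos [Nontrivial A] {a : A} (ha : 0 ≤ a) (hu : IsUnit a) :
    0 < sInf (spectrum ℝ a) := by
  have hmem := (spectrum.isCompact (𝕜 := ℝ) a).sInf_mem
    (ContinuousFunctionalCalculus.spectrum_nonempty a (.of_nonneg ha))
  refine (spectrum_nonneg_of_nonneg ha hmem).lt_of_ne fun h => ?_
  exact (spectrum.zero_mem_iff ℝ).1 (h ▸ hmem) hu

end CStarAlgebra

omit [CompleteSpace H] in
lemma delta_nonneg (a : H →L[ℂ] H) : 0 ≤ Delta a :=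
  Real.iInf_nonneg fun _ => norm_nonneg _

omit [CompleteSpace H] in
lemma delta_le_norm (a : H →L[ℂ] H) {A : ℝ} (hA : 0 < A) : Delta a ≤ ‖1 - A⁻¹ • a‖ :=
  ciInf_le (f := fun A : {A : ℝ // 0 < A} => ‖(1 : H →L[ℂ] H) - A.1⁻¹ • a‖)
    ⟨0, by rintro _ ⟨_, rfl⟩; exact norm_nonneg _⟩ ⟨A, hA⟩

lemma delta_le_contrast {a : H →L[ℂ] H} (ha : IsSelfAdjoint a) {m M : ℝ} (hm : 0 < m)
    (hmM : m ≤ M) (hσ : spectrum ℝ a ⊆ Icc m M) : Delta a ≤ contrast m M := by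
  calc Delta a ≤ ‖1 - ((m + M) / 2)⁻¹ • a‖ := delta_le_norm a (by linarith)
    _ = ‖cfc (fun t : ℝ => 1 - ((m + M) / 2)⁻¹ * t) a‖ := by
      rw [cfc_sub .., cfc_const .., cfc_const_mul_id .., map_one]
    _ ≤ contrast m M := norm_cfc_le (contrast_nonneg hm.le hmM) fun t ht =>
      abs_one_sub_inv_midpoint_mul_le_contrast hm (hσ ht).1 (hσ ht).2

lemma deltaS_le_contrast {a : H →L[ℂ] H} {m M : ℝ} (hm : 0 < m)
    (hne : (spectrum ℝ a).Nonempty) (hσ : spectrum ℝ a ⊆ Icc m M) :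
    DeltaS a ≤ contrast m M := by
  have hc := spectrum.isCompact (𝕜 := ℝ) a
  obtain ⟨hm_le, -⟩ := hσ (hc.sInf_mem hne)
  obtain ⟨-, hle_M⟩ := hσ (hc.sSup_mem hne)
  have hpos : 0 < sInf (spectrum ℝ a) := hm.trans_le hm_le
  have hle : sInf (spectrum ℝ a) ≤ sSup (spectrum ℝ a) := csInf_le_csSup hne hc.bddBelow hc.bddAbove
  exact (contrast_le_contrast_iff hpos (hpos.le.trans hle) hm (hpos.le.trans (hle.trans hle_M))).2
    (mul_le_mul hle_M hm_le hm.le (hpos.le.trans (hle.trans hle_M)))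

omit [CompleteSpace H] in
lemma deltaS_le_one {a : H →L[ℂ] H} (h : spectrum ℝ a ⊆ Ici 0) : DeltaS a ≤ 1 :=
  contrast_le_one (Real.sInf_nonneg h) (Real.sSup_nonneg h)

omit [CompleteSpace H] in
lemma deltaS_eq_zero_of_subsingleton [Subsingleton H] (a : H →L[ℂ] H) : DeltaS a = 0 := by
  simp [DeltaS, spectrum.of_subsingleton]

section Nontrivial

variable [Nontrivial H]

lemma contrast_le_delta {a : H →L[ℂ] H} {s t : ℝ} (hs : 0 ≤ s) (hst : s ≤ t)
    (hsa : s ∈ spectrum ℝ a) (hta : t ∈ spectrum ℝ a) : contrast s t ≤ Delta a :=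
  le_ciInf fun _ => (contrast_le_max_abs_one_sub_mul _ hs hst).trans
    (max_le (abs_one_sub_mul_le_norm_one_sub_smul hsa) (abs_one_sub_mul_le_norm_one_sub_smul hta))

lemma one_le_delta_of_not_isUnit {a : H →L[ℂ] H} (ha : ¬IsUnit a) : 1 ≤ Delta a :=
  le_ciInf fun A => by
    simpa using abs_one_sub_mul_le_norm_one_sub_smul (r := A.1⁻¹) ((spectrum.zero_mem_iff ℝ).2 ha)

lemma delta_eq_deltaS {a : H →L[ℂ] H} (ha : 0 ≤ a) (hu : IsUnit a) : Delta a = DeltaS a := by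
  have hc := spectrum.isCompact (𝕜 := ℝ) a
  have hne := ContinuousFunctionalCalculus.spectrum_nonempty (R := ℝ) a (.of_nonneg ha)
  have hpos := sInf_spectrum_pos ha hu
  have hle := csInf_le_csSup hne hc.bddBelow hc.bddAbove
  exact le_antisymm
    (delta_le_contrast (.of_nonneg ha) hpos hle (subset_Icc_csInf_csSup hc.bddBelow hc.bddAbove))
    (contrast_le_delta hpos.le hle (hc.sInf_mem hne) (hc.sSup_mem hne))

theorem deltaS_mul_le_delta_sq {x y : H →L[ℂ] H} (hx : 0 ≤ x) (hy : 0 ≤ y) (hux : IsUnit x)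
    (huy : IsUnit y) (hΔ : Delta x ≤ Delta y) : DeltaS (x * y) ≤ Delta (y ^ 2) := by
  have hcx := spectrum.isCompact (𝕜 := ℝ) x
  have hcy := spectrum.isCompact (𝕜 := ℝ) y
  have hnex := ContinuousFunctionalCalculus.spectrum_nonempty (R := ℝ) x (.of_nonneg hx)
  have hney := ContinuousFunctionalCalculus.spectrum_nonempty (R := ℝ) y (.of_nonneg hy)
  set mx := sInf (spectrum ℝ x)
  set Mx := sSup (spectrum ℝ x)
  set my := sInf (spectrum ℝ y)
  set My := sSup (spectrum ℝ y)
  have hmx : 0 < mx := sInf_spectrum_pos hx hux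
  have hmy : 0 < my := sInf_spectrum_pos hy huy
  have hmMx : mx ≤ Mx := csInf_le_csSup hnex hcx.bddBelow hcx.bddAbove
  have hmMy : my ≤ My := csInf_le_csSup hney hcy.bddBelow hcy.bddAbove
  have hcond : Mx * my ≤ My * mx := by
    rw [delta_eq_deltaS hx hux, delta_eq_deltaS hy huy] at hΔ
    exact (contrast_le_contrast_iff hmx (hmx.le.trans hmMx) hmy (hmy.le.trans hmMy)).1 hΔ
  have hσ := spectrum_mul_eq_spectrum_sqrt_mul_mul_sqrt hx hux y
  have hσxy : spectrum ℝ (x * y) ⊆ Icc (mx * my) (Mx * My) := hσ ▸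
    spectrum_sqrt_mul_mul_sqrt_subset_Icc hx (.of_nonneg hy) hmy.le (hmy.le.trans hmMy)
      (subset_Icc_csInf_csSup hcx.bddBelow hcx.bddAbove)
      (subset_Icc_csInf_csSup hcy.bddBelow hcy.bddAbove)
  have hne : (spectrum ℝ (x * y)).Nonempty := hσ ▸
    ContinuousFunctionalCalculus.spectrum_nonempty (R := ℝ) _
      ((IsSelfAdjoint.of_nonneg hy).conjugate_self (.of_nonneg (CFC.sqrt_nonneg x)))
  calc DeltaS (x * y) ≤ contrast (mx * my) (Mx * My) :=
        deltaS_le_contrast (mul_pos hmx hmy) hne hσxy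
    _ ≤ contrast (my ^ 2) (My ^ 2) := by
      refine (contrast_le_contrast_iff (mul_pos hmx hmy) ?_ (by positivity) (sq_nonneg _)).2 ?_
      · exact mul_nonneg (hmx.le.trans hmMx) (hmy.le.trans hmMy)
      · nlinarith [mul_le_mul_of_nonneg_left hcond (mul_nonneg (hmy.le.trans hmMy) hmy.le)]
    _ ≤ Delta (y ^ 2) := contrast_le_delta (sq_nonneg my) (pow_le_pow_left₀ hmy.le hmMy 2)
      (spectrum.pow_mem_pow y 2 (hcy.sInf_mem hney)) (spectrum.pow_mem_pow y 2 (hcy.sSup_mem hney))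

theorem deltaS_mul_le_max {x y : H →L[ℂ] H} (hx : 0 ≤ x) (hy : 0 ≤ y) :
    DeltaS (x * y) ≤ max (Delta (x ^ 2)) (Delta (y ^ 2)) := by
  have hle_one : DeltaS (x * y) ≤ 1 := deltaS_le_one (spectrum_mul_subset_Ici hx hy)
  by_cases hux : IsUnit x
  swap
  · exact hle_one.trans (le_max_of_le_left
      (one_le_delta_of_not_isUnit (by rwa [isUnit_pow_iff two_ne_zero])))
  by_cases huy : IsUnit y
  swap
  · exact hle_one.trans (le_max_of_le_right
      (one_le_delta_of_not_isUnit (by rwa [isUnit_pow_iff two_ne_zero])))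
  rcases le_total (Delta x) (Delta y) with h | h
  · exact le_max_of_le_right (deltaS_mul_le_delta_sq hx hy hux huy h)
  · have hcomm : DeltaS (x * y) = DeltaS (y * x) := by
      rw [DeltaS, DeltaS, spectrum_mul_comm_of_isUnit y hux]
    exact hcomm ▸ le_max_of_le_left (deltaS_mul_le_delta_sq hy hx huy hux h)

end Nontrivial

theorem delta_mul_le :
    (∀ x y : H →L[ℂ] H, x.IsPositive → y.IsPositive → IsUnit x → IsUnit y →
      Delta x ≤ Delta y → DeltaS (x * y) ≤ Delta (y ^ 2)) ∧
    (∀ x y : H →L[ℂ] H, x.IsPositive → y.IsPositive →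
      DeltaS (x * y) ≤ max (Delta (x ^ 2)) (Delta (y ^ 2))) := by
  rcases subsingleton_or_nontrivial H with _ | _
  · simp only [deltaS_eq_zero_of_subsingleton]
    exact ⟨fun _ y _ _ _ _ _ => delta_nonneg _,
      fun x _ _ _ => le_max_of_le_left (delta_nonneg _)⟩
  · have nonneg {x : H →L[ℂ] H} (hx : x.IsPositive) : 0 ≤ x :=
      (ContinuousLinearMap.nonneg_iff_isPositive x).2 hx
    exact ⟨fun x y hx hy hux huy hΔ => deltaS_mul_le_delta_sq (nonneg hx) (nonneg hy) hux huy hΔ,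
      fun x y hx hy => deltaS_mul_le_max (nonneg hx) (nonneg hy)⟩
end
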